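/- arXiv:2007.01163 — 2 statements merged into one kernel-verified Lean document; each statement's English description precedes it below -/
import Mathlib

section
/- Let q be a prime power, F a finite field with q² elements, and δ a generator of F^×. Let i, j ∈ ZMod (q²-1) with i ≢ j (mod q-1), and let l(i,j) = i - x_{i,j}·(q-1) ∈ ZMod (q²-1). Then δ^{l(i,j)} · (δ^i + δ^j)^q = (δ^i + δ^j) · (δ^i)^q in F. -/
/-!
Write `δ^a` for `δ ^ a.val`. Since `δ^x = 1 + δ^(j-i)`, the sum `δ^i + δ^j` is the single power
`δ^(i+x)`, so both sides of the identity are powers of `δ`, with exponents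
`l + q(i+x)` and `(i+x) + qi`. These agree in `ZMod (q²-1)` because `l = i - x(q-1)`, and
`δ` has order `q² - 1`.
-/

/-- The canonical reduction ring homomorphism `ZMod (q²-1) → ZMod (q-1)`,
which exists since `(q-1) ∣ (q²-1)`. -/
def red (q : ℕ) : ZMod (q ^ 2 - 1) →+* ZMod (q - 1) :=
  ZMod.castHom (by simpa using Nat.sub_dvd_pow_sub_pow q 1 2) (ZMod (q - 1))

theorem pow_eq_pow_of_natCast_eq {G : Type*} [Monoid G] {g : G} {n : ℕ} (hg : orderOf g = n)
    {m k : ℕ} (h : (m : ZMod n) = k) : g ^ m = g ^ k := by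
  rw [← pow_mod_orderOf, ← pow_mod_orderOf g k, hg, (ZMod.natCast_eq_natCast_iff m k n).1 h]

theorem orderOf_eq_card_sub_one_of_zpowers_eq_top {G₀ : Type*} [GroupWithZero G₀] [Fintype G₀]
    {δ : G₀ˣ} (hδ : Subgroup.zpowers δ = ⊤) : orderOf δ = Fintype.card G₀ - 1 := by
  rw [orderOf_eq_card_of_forall_mem_zpowers (fun x => hδ ▸ Subgroup.mem_top x),
    Nat.card_units, Nat.card_eq_fintype_card]

theorem units_pow_val_add_pow_val {R : Type*} [Semiring R] {δ : Rˣ} {n : ℕ} [NeZero n]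
    (hδ : orderOf δ = n) {i j x : ZMod n}
    (hx : ((δ ^ x.val : Rˣ) : R) = 1 + ((δ ^ (j - i).val : Rˣ) : R)) :
    ((δ ^ i.val : Rˣ) : R) + ((δ ^ j.val : Rˣ) : R) = ((δ ^ (i + x).val : Rˣ) : R) := by
  have hj : δ ^ j.val = δ ^ i.val * δ ^ (j - i).val := by
    rw [← pow_add]
    apply pow_eq_pow_of_natCast_eq hδ
    simp
  have hix : δ ^ (i + x).val = δ ^ i.val * δ ^ x.val := by
    rw [← pow_add]
    apply pow_eq_pow_of_natCast_eq hδ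
    simp
  rw [hj, hix, Units.val_mul, Units.val_mul, hx, mul_add, mul_one]

theorem stmt5_general (q : ℕ) (F : Type*) [Field F] [Fintype F]
    (hF : Fintype.card F = q ^ 2) (δ : Fˣ) (hδ : Subgroup.zpowers δ = ⊤)
    (i j : ZMod (q ^ 2 - 1))
    (x : ZMod (q ^ 2 - 1))
    (hx : ((δ ^ x.val : Fˣ) : F) = 1 + ((δ ^ (j - i).val : Fˣ) : F))
    (l : ZMod (q ^ 2 - 1))
    (hl : l = i - x * ((q - 1 : ℕ) : ZMod (q ^ 2 - 1))) :
    ((δ ^ l.val : Fˣ) : F) * (((δ ^ i.val : Fˣ) : F) + ((δ ^ j.val : Fˣ) : F)) ^ q =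
      (((δ ^ i.val : Fˣ) : F) + ((δ ^ j.val : Fˣ) : F)) * ((δ ^ i.val : Fˣ) : F) ^ q := by
  have horder : orderOf δ = q ^ 2 - 1 := hF ▸ orderOf_eq_card_sub_one_of_zpowers_eq_top hδ
  have hq : 1 ≤ q := Nat.pos_of_ne_zero fun h => by simp [h] at hF
  have : NeZero (q ^ 2 - 1) := ⟨horder ▸ (orderOf_pos δ).ne'⟩
  rw [units_pow_val_add_pow_val horder hx]
  simp only [← Units.val_pow_eq_pow_val, ← Units.val_mul, ← pow_mul, ← pow_add]
  congr 1
  apply pow_eq_pow_of_natCast_eq horder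
  push_cast [ZMod.natCast_zmod_val, Nat.cast_sub hq, hl]
  ring

theorem stmt5 (q : ℕ) (hq : IsPrimePow q) (F : Type*) [Field F] [Fintype F]
    (hF : Fintype.card F = q ^ 2) (δ : Fˣ) (hδ : Subgroup.zpowers δ = ⊤)
    (i j : ZMod (q ^ 2 - 1)) (hij : red q i ≠ red q j)
    (x : ZMod (q ^ 2 - 1))
    (hx : ((δ ^ x.val : Fˣ) : F) = 1 + ((δ ^ (j - i).val : Fˣ) : F))
    (y l : ZMod (q ^ 2 - 1)) (hy : y = x + i - j)
    (hl : l = i - x * ((q - 1 : ℕ) : ZMod (q ^ 2 - 1))) :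
    ((δ ^ l.val : Fˣ) : F) * (((δ ^ i.val : Fˣ) : F) + ((δ ^ j.val : Fˣ) : F)) ^ q =
      (((δ ^ i.val : Fˣ) : F) + ((δ ^ j.val : Fˣ) : F)) * ((δ ^ i.val : Fˣ) : F) ^ q :=
  stmt5_general q F hF δ hδ i j x hx l hl
end

section
/- Let q be a prime power, F a finite field with q² elements, and δ a generator of F^×. Define R : ZMod (q²-1) × ZMod (q²-1) → ZMod (q²-1) × ZMod (q²-1) by R(i,j) = (k(i,j), l(i,j)) if i ≢ j (mod q-1), and R(i,j) = (i,j) otherwise. Then R ∘ R is the identity map; in particular R is a bijection. -/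
/-- `xij q δ i j` is the element `x_{i,j}`, i.e. the unique `x ∈ ZMod (q²-1)` with
`δ^x = 1 + δ^{j-i}` in `F` (chosen by choice; when `δ` is a generator and
`i ≢ j (mod q-1)`, such an `x` exists and is unique). -/
noncomputable def xij (q : ℕ) {F : Type*} [Field F] (δ : Fˣ) (i j : ZMod (q ^ 2 - 1)) :
    ZMod (q ^ 2 - 1) :=
  @Classical.epsilon _ ⟨0⟩ fun x : ZMod (q ^ 2 - 1) =>
    ((δ ^ x.val : Fˣ) : F) = 1 + ((δ ^ (j - i).val : Fˣ) : F)

/-- `y_{i,j} = x_{i,j} + i - j`. -/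
noncomputable def yij (q : ℕ) {F : Type*} [Field F] (δ : Fˣ) (i j : ZMod (q ^ 2 - 1)) :
    ZMod (q ^ 2 - 1) :=
  xij q δ i j + i - j

/-- `k(i,j) = j - y_{i,j}·(q-1)`. -/
noncomputable def kij (q : ℕ) {F : Type*} [Field F] (δ : Fˣ) (i j : ZMod (q ^ 2 - 1)) :
    ZMod (q ^ 2 - 1) :=
  j - yij q δ i j * ((q - 1 : ℕ) : ZMod (q ^ 2 - 1))

/-- `l(i,j) = i - x_{i,j}·(q-1)`. -/
noncomputable def lij (q : ℕ) {F : Type*} [Field F] (δ : Fˣ) (i j : ZMod (q ^ 2 - 1)) :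
    ZMod (q ^ 2 - 1) :=
  i - xij q δ i j * ((q - 1 : ℕ) : ZMod (q ^ 2 - 1))

/-- The map `R(i,j) = (k(i,j), l(i,j))` if `i ≢ j (mod q-1)`, and `R(i,j) = (i,j)`
otherwise. -/
noncomputable def Rmap (q : ℕ) {F : Type*} [Field F] (δ : Fˣ)
    (p : ZMod (q ^ 2 - 1) × ZMod (q ^ 2 - 1)) : ZMod (q ^ 2 - 1) × ZMod (q ^ 2 - 1) :=
  if red q p.1 ≠ red q p.2 then (kij q δ p.1 p.2, lij q δ p.1 p.2) else p

/-!
Write `e a = δ ^ a` and `x, y, k, l` for `x_{i,j}, y_{i,j}, k(i,j), l(i,j)`. Then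
`e y = 1 + e (i - j)` and `l - k = q (i - j)`, so the Frobenius `t ↦ t ^ q` of `F` turns the first
identity into `e (q y) = 1 + e (l - k)`: thus `x_{k,l} = q y` and `y_{k,l} = q x`, and since
`(q - 1)(q + 1) = 0` in `ZMod (q² - 1)` this gives `k(k,l) = i` and `l(k,l) = j`. The pair `(k, l)`
is again off the diagonal modulo `q - 1` because `q ≡ 1`. Finally `1 + δ^{j-i} ≠ 0` off the
diagonal, since `δ^m = -1` implies `δ^{m(q+1)} = (-1)^{q+1} = 1`, hence `(q - 1) ∣ m`.
-/

section PowVal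

variable {G : Type*} [Monoid G] {g : G} {n : ℕ} [NeZero n]

theorem pow_val_eq_pow_iff (hg : orderOf g = n) (a : ZMod n) (m : ℕ) :
    g ^ a.val = g ^ m ↔ a = m := by
  have hfin : IsOfFinOrder g := orderOf_pos_iff.mp (hg ▸ NeZero.pos n)
  rw [hfin.pow_eq_pow_iff_modEq, hg, ← ZMod.natCast_eq_natCast_iff, ZMod.natCast_zmod_val]

theorem pow_val_add (hg : orderOf g = n) (a b : ZMod n) :
    g ^ (a + b).val = g ^ a.val * g ^ b.val := by
  rw [← pow_add, pow_val_eq_pow_iff hg]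
  push_cast [ZMod.natCast_zmod_val]
  rfl

theorem pow_val_mul_natCast (hg : orderOf g = n) (a : ZMod n) (m : ℕ) :
    g ^ (a * m).val = (g ^ a.val) ^ m := by
  rw [← pow_mul, pow_val_eq_pow_iff hg]
  push_cast [ZMod.natCast_zmod_val]
  rfl

theorem pow_val_injective (hg : orderOf g = n) : Function.Injective fun a : ZMod n ↦ g ^ a.val :=
  fun a b h ↦ ((pow_val_eq_pow_iff hg a b.val).mp h).trans (ZMod.natCast_zmod_val b)

end PowVal

theorem exists_pow_val_eq_of_mem_zpowers {G : Type*} [Group G] {g u : G} {n : ℕ} [NeZero n]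
    (hg : orderOf g = n) (hu : u ∈ Subgroup.zpowers g) : ∃ a : ZMod n, g ^ a.val = u := by
  have hfin : IsOfFinOrder g := orderOf_pos_iff.mp (hg ▸ NeZero.pos n)
  obtain ⟨m, rfl⟩ := hfin.mem_powers_iff_mem_zpowers.mpr hu
  exact ⟨m, (pow_val_eq_pow_iff hg _ _).mpr rfl⟩

namespace FiniteField

variable {F : Type*} [Field F] [Fintype F] {q : ℕ}

theorem exists_eq_ringChar_pow_of_dvd_card (hq : q ∣ Fintype.card F) :
    ∃ m, q = ringChar F ^ m := by
  obtain ⟨n, hp, hcard⟩ := FiniteField.card F (ringChar F)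
  obtain ⟨m, -, hm⟩ := (Nat.dvd_prime_pow hp).mp (hcard ▸ hq)
  exact ⟨m, hm⟩

theorem add_pow_of_dvd_card (hq : q ∣ Fintype.card F) (a b : F) :
    (a + b) ^ q = a ^ q + b ^ q := by
  obtain ⟨m, rfl⟩ := exists_eq_ringChar_pow_of_dvd_card hq
  have : Fact (ringChar F).Prime := ⟨CharP.char_is_prime F _⟩
  exact add_pow_char_pow a b _ _

theorem neg_one_pow_of_dvd_card (hq : q ∣ Fintype.card F) : (-1 : F) ^ q = -1 := by
  obtain ⟨m, rfl⟩ := exists_eq_ringChar_pow_of_dvd_card hq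
  have : Fact (ringChar F).Prime := ⟨CharP.char_is_prime F _⟩
  exact neg_one_pow_char_pow F _ m

end FiniteField

theorem sq_sub_one_eq_mul (q : ℕ) : q ^ 2 - 1 = (q - 1) * (q + 1) := by
  simpa [mul_comm] using Nat.sq_sub_sq q 1

theorem natCast_sub_one_mul_add_one (q : ℕ) : ((q - 1 : ℕ) : ZMod (q ^ 2 - 1)) * (q + 1) = 0 := by
  rw [← Nat.cast_add_one, ← Nat.cast_mul, ← sq_sub_one_eq_mul, ZMod.natCast_self]

theorem red_natCast_self {q : ℕ} (hq : 0 < q) : red q q = 1 := by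
  rw [map_natCast, ← Nat.sub_add_cancel hq, Nat.cast_succ, ZMod.natCast_self, zero_add]

theorem red_eq_of_dvd_val_sub {q : ℕ} [NeZero (q ^ 2 - 1)] {i j : ZMod (q ^ 2 - 1)}
    (h : q - 1 ∣ (j - i).val) : red q i = red q j := by
  have : red q (j - i) = 0 := by
    rw [← ZMod.natCast_zmod_val (j - i), map_natCast, ZMod.natCast_eq_zero_iff]
    exact h
  rw [map_sub, sub_eq_zero] at this
  exact this.symm

section Involution

variable {q : ℕ} {F : Type*} [Field F] {δ : Fˣ}

theorem kij_sub_lij (hq : 0 < q) (i j : ZMod (q ^ 2 - 1)) :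
    kij q δ i j - lij q δ i j = (j - i) * q := by
  rw [kij, lij, yij, Nat.cast_pred hq]
  ring

theorem red_kij_ne_red_lij (hq : 0 < q) {i j : ZMod (q ^ 2 - 1)} (hij : red q i ≠ red q j) :
    red q (kij q δ i j) ≠ red q (lij q δ i j) := by
  rw [Ne, ← sub_eq_zero, ← map_sub, kij_sub_lij hq, map_mul, red_natCast_self hq, mul_one,
    map_sub, sub_eq_zero]
  exact hij.symm

variable [Fintype F]

theorem one_lt_of_card_eq_sq (hF : Fintype.card F = q ^ 2) : 1 < q :=
  (Nat.one_lt_pow_iff two_ne_zero).mp (hF ▸ Fintype.one_lt_card)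

theorem neZero_sq_sub_one_of_card_eq_sq (hF : Fintype.card F = q ^ 2) : NeZero (q ^ 2 - 1) :=
  ⟨Nat.sub_ne_zero_of_lt (hF ▸ Fintype.one_lt_card)⟩

theorem orderOf_eq_sq_sub_one (hF : Fintype.card F = q ^ 2) (hδ : Subgroup.zpowers δ = ⊤) :
    orderOf δ = q ^ 2 - 1 := by
  classical
  rw [orderOf_eq_card_of_forall_mem_zpowers (fun u ↦ hδ ▸ Subgroup.mem_top u),
    Nat.card_eq_fintype_card, Fintype.card_units, hF]

theorem sub_one_dvd_of_coe_pow_eq_neg_one (hF : Fintype.card F = q ^ 2)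
    (hδ : Subgroup.zpowers δ = ⊤) {m : ℕ} (h : ((δ ^ m : Fˣ) : F) = -1) : q - 1 ∣ m := by
  have hpow : δ ^ (m * (q + 1)) = 1 := Units.ext <| by
    rw [pow_mul, Units.val_pow_eq_pow_val, h, pow_succ,
      FiniteField.neg_one_pow_of_dvd_card (hF ▸ dvd_pow_self q two_ne_zero)]
    simp
  have hdvd := orderOf_dvd_of_pow_eq_one hpow
  rw [orderOf_eq_sq_sub_one hF hδ, sq_sub_one_eq_mul] at hdvd
  exact Nat.dvd_of_mul_dvd_mul_right q.succ_pos hdvd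

theorem one_add_coe_pow_val_ne_zero (hF : Fintype.card F = q ^ 2) (hδ : Subgroup.zpowers δ = ⊤)
    {i j : ZMod (q ^ 2 - 1)} (hij : red q i ≠ red q j) :
    1 + ((δ ^ (j - i).val : Fˣ) : F) ≠ 0 := by
  have := neZero_sq_sub_one_of_card_eq_sq hF
  exact fun h ↦ hij <| red_eq_of_dvd_val_sub <|
    sub_one_dvd_of_coe_pow_eq_neg_one hF hδ (eq_neg_of_add_eq_zero_right h)

theorem xij_eq_of_coe_pow_val (hF : Fintype.card F = q ^ 2) (hδ : Subgroup.zpowers δ = ⊤)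
    {i j x : ZMod (q ^ 2 - 1)} (h : ((δ ^ x.val : Fˣ) : F) = 1 + ((δ ^ (j - i).val : Fˣ) : F)) :
    xij q δ i j = x := by
  have := neZero_sq_sub_one_of_card_eq_sq hF
  have hspec := Classical.epsilon_spec
    (p := fun y : ZMod (q ^ 2 - 1) ↦ ((δ ^ y.val : Fˣ) : F) = 1 + ((δ ^ (j - i).val : Fˣ) : F))
    ⟨x, h⟩
  exact pow_val_injective (orderOf_eq_sq_sub_one hF hδ) (Units.ext (hspec.trans h.symm))

theorem coe_pow_val_xij (hF : Fintype.card F = q ^ 2) (hδ : Subgroup.zpowers δ = ⊤)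
    {i j : ZMod (q ^ 2 - 1)} (hij : red q i ≠ red q j) :
    ((δ ^ (xij q δ i j).val : Fˣ) : F) = 1 + ((δ ^ (j - i).val : Fˣ) : F) := by
  have := neZero_sq_sub_one_of_card_eq_sq hF
  obtain ⟨x, hx⟩ := exists_pow_val_eq_of_mem_zpowers (orderOf_eq_sq_sub_one hF hδ)
    (hδ ▸ Subgroup.mem_top (Units.mk0 _ (one_add_coe_pow_val_ne_zero hF hδ hij)))
  have hx' := congrArg Units.val hx
  rwa [xij_eq_of_coe_pow_val hF hδ hx']

theorem coe_pow_val_yij (hF : Fintype.card F = q ^ 2) (hδ : Subgroup.zpowers δ = ⊤)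
    {i j : ZMod (q ^ 2 - 1)} (hij : red q i ≠ red q j) :
    ((δ ^ (yij q δ i j).val : Fˣ) : F) = 1 + ((δ ^ (i - j).val : Fˣ) : F) := by
  have := neZero_sq_sub_one_of_card_eq_sq hF
  have ho := orderOf_eq_sq_sub_one hF hδ
  have hinv : ((δ ^ (j - i).val : Fˣ) : F) * ((δ ^ (i - j).val : Fˣ) : F) = 1 := by
    rw [← Units.val_mul, ← pow_val_add ho, sub_add_sub_cancel, sub_self, ZMod.val_zero, pow_zero,
      Units.val_one]
  rw [yij, add_sub_assoc, pow_val_add ho, Units.val_mul, coe_pow_val_xij hF hδ hij]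
  linear_combination hinv

theorem xij_kij_lij (hF : Fintype.card F = q ^ 2) (hδ : Subgroup.zpowers δ = ⊤)
    {i j : ZMod (q ^ 2 - 1)} (hij : red q i ≠ red q j) :
    xij q δ (kij q δ i j) (lij q δ i j) = yij q δ i j * q := by
  have := neZero_sq_sub_one_of_card_eq_sq hF
  have ho := orderOf_eq_sq_sub_one hF hδ
  have hlk : lij q δ i j - kij q δ i j = (i - j) * q := by
    rw [← neg_sub, kij_sub_lij (one_lt_of_card_eq_sq hF).le, ← neg_mul, neg_sub]
  apply xij_eq_of_coe_pow_val hF hδ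
  rw [hlk, pow_val_mul_natCast ho, pow_val_mul_natCast ho, Units.val_pow_eq_pow_val (δ ^ _) q,
    Units.val_pow_eq_pow_val (δ ^ _) q, coe_pow_val_yij hF hδ hij,
    FiniteField.add_pow_of_dvd_card (hF ▸ dvd_pow_self q two_ne_zero), one_pow]

theorem yij_kij_lij (hF : Fintype.card F = q ^ 2) (hδ : Subgroup.zpowers δ = ⊤)
    {i j : ZMod (q ^ 2 - 1)} (hij : red q i ≠ red q j) :
    yij q δ (kij q δ i j) (lij q δ i j) = xij q δ i j * q := by
  rw [yij, xij_kij_lij hF hδ hij, add_sub_assoc, kij_sub_lij (one_lt_of_card_eq_sq hF).le]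
  rw [yij]
  ring

theorem kij_kij_lij (hF : Fintype.card F = q ^ 2) (hδ : Subgroup.zpowers δ = ⊤)
    {i j : ZMod (q ^ 2 - 1)} (hij : red q i ≠ red q j) :
    kij q δ (kij q δ i j) (lij q δ i j) = i := by
  rw [kij, yij_kij_lij hF hδ hij, lij]
  linear_combination (-xij q δ i j) * natCast_sub_one_mul_add_one q

theorem lij_kij_lij (hF : Fintype.card F = q ^ 2) (hδ : Subgroup.zpowers δ = ⊤)
    {i j : ZMod (q ^ 2 - 1)} (hij : red q i ≠ red q j) :
    lij q δ (kij q δ i j) (lij q δ i j) = j := by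
  rw [lij, xij_kij_lij hF hδ hij, kij]
  linear_combination (-yij q δ i j) * natCast_sub_one_mul_add_one q

theorem Rmap_Rmap (hF : Fintype.card F = q ^ 2) (hδ : Subgroup.zpowers δ = ⊤)
    (p : ZMod (q ^ 2 - 1) × ZMod (q ^ 2 - 1)) : Rmap q δ (Rmap q δ p) = p := by
  obtain ⟨i, j⟩ := p
  by_cases hij : red q i = red q j
  · simp [Rmap, hij]
  · have hkl := red_kij_ne_red_lij (δ := δ) (one_lt_of_card_eq_sq hF).le hij
    simp only [Rmap, ne_eq, hij, not_false_eq_true, if_true, hkl, kij_kij_lij hF hδ hij,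
      lij_kij_lij hF hδ hij]

end Involution

theorem stmt8_general (q : ℕ) (F : Type*) [Field F] [Fintype F]
    (hF : Fintype.card F = q ^ 2) (δ : Fˣ) (hδ : Subgroup.zpowers δ = ⊤) :
    Rmap q δ ∘ Rmap q δ = id ∧ Function.Bijective (Rmap q δ) :=
  ⟨funext (Rmap_Rmap hF hδ), Function.Involutive.bijective (Rmap_Rmap hF hδ)⟩

theorem stmt8 (q : ℕ) (hq : IsPrimePow q) (F : Type*) [Field F] [Fintype F]
    (hF : Fintype.card F = q ^ 2) (δ : Fˣ) (hδ : Subgroup.zpowers δ = ⊤) :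
    Rmap q δ ∘ Rmap q δ = id ∧ Function.Bijective (Rmap q δ) :=
  stmt8_general q F hF δ hδ
end
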